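/- (Equivalent systems of inequalities.) Let a = (a_1,…,a_n) with all a_i > 0, n ≥ 4, and let L_1,…,L_{n-1} ≥ 0 satisfy L_1 = a_1 and L_{n-1} = a_n. Then the following two systems are equivalent: (I) |L_k − a_k| ≤ L_{k-1} ≤ L_k + a_k for 3 ≤ k ≤ n−1, and max(0, R_k^min) ≤ L_k ≤ R_k^max for 2 ≤ k ≤ n−1; (II) |L_{k-1} − a_k| ≤ L_k ≤ L_{k-1} + a_k for 2 ≤ k ≤ n−1, and a_k ≤ L_k + L_{k-1} for 2 ≤ k ≤ n−1. -/

import Mathlib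

/-! Both systems contain the triangle inequalities for `(L_{k-1}, a_k, L_k)`, `3 ≤ k ≤ n - 1`,
only written with the roles of `L_{k-1}` and `L_k` exchanged; for `k = 2`, where `L_1 = a_1`,
`R_2^min = |a_1 - a_2|` and `R_2^max = a_1 + a_2`, the bounds of (I) are exactly the triangle
inequalities of (II). Conversely, (II) forces the bounds of (I): adding up
`L_k ≤ L_{k-1} + a_k` gives `L_k ≤ R_k^max`, and for `i ≤ k` the chain
`2 a_i - R_i^max ≤ a_i - L_{i-1} ≤ L_i`, `2 a_i - R_{k+1}^max ≤ L_k - a_{k+1} ≤ L_{k+1}`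
gives `2 a_i - R_k^max ≤ L_k` by induction on `k`. -/

/-- `R_k^min = max_{1 ≤ i ≤ k} (2 a_i − Σ_{j=1}^k a_j)`. -/
noncomputable def Rmin (a : ℕ → ℝ) (k : ℕ) : ℝ :=
  sSup ((fun i => 2 * a i - ∑ j ∈ Finset.Icc 1 k, a j) '' Set.Icc 1 k)

/-- `R_k^max = Σ_{j=1}^k a_j`. -/
noncomputable def Rmax (a : ℕ → ℝ) (k : ℕ) : ℝ :=
  ∑ j ∈ Finset.Icc 1 k, a j

-- Both sides say that `x`, `y`, `z` satisfy the three triangle inequalities.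
theorem abs_sub_le_and_le_add_iff_swap {α : Type*} [AddCommGroup α] [LinearOrder α]
    [IsOrderedAddMonoid α] (x y z : α) :
    |x - y| ≤ z ∧ z ≤ x + y ↔ |z - y| ≤ x ∧ x ≤ z + y ∧ y ≤ x + z := by
  simp only [abs_sub_le_iff, sub_le_iff_le_add]
  grind

theorem Rmax_one (a : ℕ → ℝ) : Rmax a 1 = a 1 := by
  simp [Rmax]

theorem Rmax_succ (a : ℕ → ℝ) (k : ℕ) : Rmax a (k + 1) = Rmax a k + a (k + 1) :=
  Finset.sum_Icc_succ_top (Nat.le_add_left 1 k) a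

theorem Rmax_two (a : ℕ → ℝ) : Rmax a 2 = a 1 + a 2 := by
  rw [Rmax_succ, Rmax_one]

theorem Rmin_le_iff (a : ℕ → ℝ) {k : ℕ} (hk : 1 ≤ k) {x : ℝ} :
    Rmin a k ≤ x ↔ ∀ i ∈ Set.Icc 1 k, 2 * a i - Rmax a k ≤ x := by
  rw [Rmin, csSup_le_iff ((Set.finite_Icc 1 k).image _).bddAbove
    ((Set.nonempty_Icc.2 hk).image _), Set.forall_mem_image, Rmax]

theorem Rmin_two (a : ℕ → ℝ) : Rmin a 2 = |a 1 - a 2| := by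
  refine le_antisymm ((Rmin_le_iff a one_le_two).2 fun i ⟨hi1, hi2⟩ => ?_) ?_
  · interval_cases i <;> rw [Rmax_two] <;>
      linarith [le_abs_self (a 1 - a 2), neg_abs_le (a 1 - a 2)]
  · have h := (Rmin_le_iff a one_le_two).1 le_rfl
    rw [Rmax_two] at h
    refine abs_sub_le_iff.2 ⟨?_, ?_⟩ <;>
      linarith [h 1 ⟨le_rfl, one_le_two⟩, h 2 ⟨one_le_two, le_rfl⟩]

section Chain

variable {a L : ℕ → ℝ} {m : ℕ}

theorem le_Rmax_of_le_add (h1 : L 1 ≤ a 1) (hstep : ∀ k, 2 ≤ k → k ≤ m → L k ≤ L (k - 1) + a k)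
    {k : ℕ} (hk : 1 ≤ k) (hkm : k ≤ m) : L k ≤ Rmax a k := by
  induction k, hk using Nat.le_induction with
  | base => rwa [Rmax_one]
  | succ k hk ih =>
    have := hstep (k + 1) (by omega) hkm
    rw [Nat.add_sub_cancel] at this
    rw [Rmax_succ]
    linarith [ih (by omega)]

theorem two_mul_sub_Rmax_le (h1 : a 1 ≤ L 1) (hmax : ∀ k, 1 ≤ k → k ≤ m → L k ≤ Rmax a k)
    (hsum : ∀ k, 2 ≤ k → k ≤ m → a k ≤ L k + L (k - 1))
    (hdiff : ∀ k, 2 ≤ k → k ≤ m → L (k - 1) - a k ≤ L k)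
    {i k : ℕ} (hi : 1 ≤ i) (hik : i ≤ k) (hkm : k ≤ m) : 2 * a i - Rmax a k ≤ L k := by
  induction k, hik using Nat.le_induction with
  | base =>
    obtain rfl | hi2 := hi.eq_or_lt
    · rw [Rmax_one]; linarith
    · obtain ⟨j, rfl⟩ : ∃ j, i = j + 1 := ⟨i - 1, by omega⟩
      have := hsum (j + 1) hi2 hkm
      rw [Nat.add_sub_cancel] at this
      rw [Rmax_succ]
      linarith [hmax j (by omega) (by omega)]
  | succ k hik ih =>
    have := hdiff (k + 1) (by omega) hkm
    rw [Nat.add_sub_cancel] at this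
    rw [Rmax_succ]
    linarith [ih (by omega)]

end Chain

theorem systems_equivalent_general
    (n : ℕ) (a : ℕ → ℝ) (L : ℕ → ℝ) (hL0 : ∀ k, 1 ≤ k → k ≤ n - 1 → 0 ≤ L k)
    (hL1 : L 1 = a 1) :
    ((∀ k, 3 ≤ k → k ≤ n - 1 → |L k - a k| ≤ L (k - 1) ∧ L (k - 1) ≤ L k + a k) ∧
      (∀ k, 2 ≤ k → k ≤ n - 1 → max 0 (Rmin a k) ≤ L k ∧ L k ≤ Rmax a k)) ↔
    (∀ k, 2 ≤ k → k ≤ n - 1 →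
      |L (k - 1) - a k| ≤ L k ∧ L k ≤ L (k - 1) + a k ∧ a k ≤ L k + L (k - 1)) := by
  constructor
  · rintro ⟨htri, hbounds⟩ k hk2 hkn
    obtain rfl | hk3 := hk2.eq_or_lt
    · obtain ⟨hlo, hhi⟩ := hbounds 2 le_rfl hkn
      rw [Rmin_two, ← hL1, max_le_iff] at hlo
      rw [Rmax_two, ← hL1] at hhi
      exact ⟨hlo.2, hhi, by linarith [neg_abs_le (L 1 - a 2), hlo.2]⟩
    · exact (abs_sub_le_and_le_add_iff_swap _ _ _).1 (htri k hk3 hkn)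
  · intro hII
    have hmax k (hk : 1 ≤ k) (hkn : k ≤ n - 1) : L k ≤ Rmax a k :=
      le_Rmax_of_le_add hL1.le (fun k hk hkn => (hII k hk hkn).2.1) hk hkn
    have hlower i k (hi : 1 ≤ i) (hik : i ≤ k) (hkn : k ≤ n - 1) : 2 * a i - Rmax a k ≤ L k :=
      two_mul_sub_Rmax_le hL1.ge hmax (fun k hk hkn => (hII k hk hkn).2.2)
        (fun k hk hkn => (le_abs_self _).trans (hII k hk hkn).1) hi hik hkn
    refine ⟨fun k hk3 hkn => (abs_sub_le_and_le_add_iff_swap _ _ _).2 (hII k (by omega) hkn),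
      fun k hk2 hkn => ⟨max_le (hL0 k (by omega) hkn) ?_, hmax k (by omega) hkn⟩⟩
    exact (Rmin_le_iff a (by omega)).2 fun i ⟨hi, hik⟩ => hlower i k hi hik hkn

/-- Equivalence of the two systems of inequalities for the diagonal lengths of a closed
kinematic chain: with `L_1 = a_1`, `L_{n-1} = a_n` and `L_k ≥ 0`, system (I)
(`|L_k − a_k| ≤ L_{k-1} ≤ L_k + a_k` for `3 ≤ k ≤ n−1`, and
`max(0, R_k^min) ≤ L_k ≤ R_k^max` for `2 ≤ k ≤ n−1`) holds if and only if system (II)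
(`|L_{k-1} − a_k| ≤ L_k ≤ L_{k-1} + a_k` and `a_k ≤ L_k + L_{k-1}` for `2 ≤ k ≤ n−1`)
holds. -/
theorem systems_equivalent
    (n : ℕ) (hn : 4 ≤ n) (a : ℕ → ℝ) (ha : ∀ i, 1 ≤ i → i ≤ n → 0 < a i)
    (L : ℕ → ℝ) (hL0 : ∀ k, 1 ≤ k → k ≤ n - 1 → 0 ≤ L k)
    (hL1 : L 1 = a 1) (hLn : L (n - 1) = a n) :
    ((∀ k, 3 ≤ k → k ≤ n - 1 → |L k - a k| ≤ L (k - 1) ∧ L (k - 1) ≤ L k + a k) ∧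
      (∀ k, 2 ≤ k → k ≤ n - 1 → max 0 (Rmin a k) ≤ L k ∧ L k ≤ Rmax a k)) ↔
    (∀ k, 2 ≤ k → k ≤ n - 1 →
      |L (k - 1) - a k| ≤ L k ∧ L k ≤ L (k - 1) + a k ∧ a k ≤ L k + L (k - 1)) :=
  systems_equivalent_general n a L hL0 hL1
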